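/- arXiv:1905.03324 — 5 statements merged into one kernel-verified Lean document; each statement's English description precedes it below -/
import Mathlib

section
/- Let N ≥ 3, let g : ℝ → ℝ be continuous with antiderivative G(s) = ∫₀^s g(τ) dτ, and let u : EuclideanSpace ℝ (Fin N) → ℝ be a twice continuously differentiable function with compact support satisfying the equation Δu(x) + g(u(x)) = 0 for every x. Then u satisfies the Pohozaev identity (N − 2) ∫_{ℝ^N} ‖∇u(x)‖² dx = 2N ∫_{ℝ^N} G(u(x)) dx. -/
/-!
Multiply the equation by `x · ∇u` and integrate. For a compactly supported `C¹` function `w`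
on an `N`-dimensional space, integrating by parts in each coordinate gives the divergence
identity `∫ x · ∇w = -N ∫ w`. Applied to `w = G ∘ u`, whose derivative is `g(u) ∇u`, it
yields `∫ (x · ∇u) Δu = N ∫ G(u)`. On the other hand, one more integration by parts, the
symmetry of the Hessian and the same identity for `w = ‖∇u‖²` give the Rellich identity
`∫ (x · ∇u) Δu = (N - 2) / 2 ∫ ‖∇u‖²`.
-/

open MeasureTheory

/-- The Laplacian of `u` at `x`: the sum of the second directional derivatives of `u`
along the standard orthonormal basis of `EuclideanSpace ℝ (Fin N)`. -/
noncomputable def laplacian {N : ℕ} (u : EuclideanSpace ℝ (Fin N) → ℝ)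
    (x : EuclideanSpace ℝ (Fin N)) : ℝ :=
  ∑ i : Fin N,
    fderiv ℝ (fun y => fderiv ℝ u y (EuclideanSpace.basisFun (Fin N) ℝ i)) x
      (EuclideanSpace.basisFun (Fin N) ℝ i)

open Module

section FDeriv

variable {𝕜 E F : Type*} [NontriviallyNormedField 𝕜] [NormedAddCommGroup E]
  [NormedSpace 𝕜 E] [NormedAddCommGroup F] [NormedSpace 𝕜 F] {u : E → F} {x : E}

theorem fderiv_fderiv_apply (hu : DifferentiableAt 𝕜 (fderiv 𝕜 u) x) (v w : E) :
    fderiv 𝕜 (fun y => fderiv 𝕜 u y v) x w = fderiv 𝕜 (fderiv 𝕜 u) x w v := by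
  rw [fderiv_clm_apply hu (differentiableAt_const v)]
  simp

theorem fderiv_fderiv_apply_self (hu : DifferentiableAt 𝕜 (fderiv 𝕜 u) x) (v : E) :
    fderiv 𝕜 (fun y => fderiv 𝕜 u y y) x v =
      fderiv 𝕜 (fderiv 𝕜 u) x v x + fderiv 𝕜 u x v := by
  change fderiv 𝕜 (fun y => fderiv 𝕜 u y (id y)) x v = _
  rw [fderiv_clm_apply hu differentiableAt_id]
  simp [add_comm]

theorem ContDiff.continuous_fderiv_apply_const (hu : ContDiff 𝕜 1 u) (v : E) :
    Continuous fun x => fderiv 𝕜 u x v :=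
  (hu.continuous_fderiv one_ne_zero).clm_apply continuous_const

end FDeriv

theorem Continuous.integrable_mul_of_hasCompactSupport {X : Type*} [TopologicalSpace X]
    [MeasurableSpace X] [OpensMeasurableSpace X] (μ : Measure X) [IsFiniteMeasureOnCompacts μ]
    {f g : X → ℝ} (hf : Continuous f) (hg : Continuous g) (hcs : HasCompactSupport g) :
    Integrable (fun x => f x * g x) μ :=
  (hf.mul hg).integrable_of_hasCompactSupport hcs.mul_left

section InnerProductSpace

variable {ι E : Type*} [Fintype ι] [NormedAddCommGroup E] [InnerProductSpace ℝ E]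
  [CompleteSpace E] (b : OrthonormalBasis ι ℝ E) {u : E → ℝ} {x : E}

theorem OrthonormalBasis.sum_sq_apply_eq_norm_sq (L : E →L[ℝ] ℝ) :
    ∑ i, L (b i) ^ 2 = ‖L‖ ^ 2 := by
  set y := (InnerProductSpace.toDual ℝ E).symm L
  have hL : ∀ v, L v = inner ℝ y v := fun v => (InnerProductSpace.toDual_symm_apply).symm
  rw [← (InnerProductSpace.toDual ℝ E).symm.norm_map L, ← b.sum_sq_inner_right]
  simp_rw [hL, real_inner_comm]
  rfl

theorem fderiv_sq_norm_fderiv_apply (hu : DifferentiableAt ℝ (fderiv ℝ u) x) (v : E) :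
    fderiv ℝ (fun y => ‖fderiv ℝ u y‖ ^ 2) x v =
      2 * ∑ j, fderiv ℝ (fderiv ℝ u) x v (b j) * fderiv ℝ u x (b j) := by
  have hpartial : ∀ j, DifferentiableAt ℝ (fun y => fderiv ℝ u y (b j)) x := fun j =>
    hu.clm_apply (differentiableAt_const _)
  simp_rw [← b.sum_sq_apply_eq_norm_sq]
  rw [fderiv_fun_sum (A := fun j y => fderiv ℝ u y (b j) ^ 2) fun j _ => (hpartial j).pow 2]
  simp only [fderiv_fun_pow _ (hpartial _), sum_apply,
    smul_apply, fderiv_fderiv_apply hu, Nat.add_one_sub_one, pow_one,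
    nsmul_eq_mul, Nat.cast_ofNat, smul_eq_mul, Finset.mul_sum]
  exact Finset.sum_congr rfl fun j _ => by ring

theorem sum_fderiv_fderiv_apply_self_mul_fderiv (hu : ContDiffAt ℝ 2 u x) :
    ∑ j, fderiv ℝ (fun y => fderiv ℝ u y y) x (b j) * fderiv ℝ u x (b j) =
      ‖fderiv ℝ u x‖ ^ 2 + fderiv ℝ (fun y => ‖fderiv ℝ u y‖ ^ 2) x x / 2 := by
  have hD2 : DifferentiableAt ℝ (fderiv ℝ u) x :=
    (hu.fderiv_right (m := 1) (by norm_num)).differentiableAt one_ne_zero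
  have hsymm := hu.isSymmSndFDerivAt (by simp)
  rw [fderiv_sq_norm_fderiv_apply b hD2, ← b.sum_sq_apply_eq_norm_sq, Finset.mul_sum,
    Finset.sum_div, ← Finset.sum_add_distrib]
  simp only [fderiv_fderiv_apply_self hD2, hsymm (b _) x]
  exact Finset.sum_congr rfl fun j _ => by ring

end InnerProductSpace

section HaarMeasure

variable {E : Type*} [NormedAddCommGroup E] [NormedSpace ℝ E] [FiniteDimensional ℝ E]
  [MeasurableSpace E] [BorelSpace E] (μ : Measure E) [μ.IsAddHaarMeasure]

theorem integral_mul_fderiv_eq_neg_fderiv_mul_of_hasCompactSupport {f g : E → ℝ}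
    (hf : ContDiff ℝ 1 f) (hg : ContDiff ℝ 1 g) (hcs : HasCompactSupport g) (v : E) :
    ∫ x, f x * fderiv ℝ g x v ∂μ = -∫ x, fderiv ℝ f x v * g x ∂μ :=
  integral_mul_fderiv_eq_neg_fderiv_mul_of_integrable
    ((hf.continuous_fderiv_apply_const v).integrable_mul_of_hasCompactSupport μ hg.continuous hcs)
    (hf.continuous.integrable_mul_of_hasCompactSupport μ (hg.continuous_fderiv_apply_const v)
      (hcs.fderiv_apply (𝕜 := ℝ) v))
    (hf.continuous.integrable_mul_of_hasCompactSupport μ hg.continuous hcs)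
    (fun x _ => hf.differentiable one_ne_zero x) (fun x _ => hg.differentiable one_ne_zero x)

theorem integral_fderiv_apply_self_eq_neg_finrank_mul {w : E → ℝ} (hw : ContDiff ℝ 1 w)
    (hcs : HasCompactSupport w) :
    ∫ x, fderiv ℝ w x x ∂μ = -(finrank ℝ E * ∫ x, w x ∂μ) := by
  let b := Module.finBasis ℝ E
  let c i : E →L[ℝ] ℝ := LinearMap.toContinuousLinearMap (b.coord i)
  have hexpand : ∀ x, fderiv ℝ w x x = ∑ i, c i x * fderiv ℝ w x (b i) := by
    intro x
    calc fderiv ℝ w x x = fderiv ℝ w x (∑ i, b.repr x i • b i) := by rw [b.sum_repr]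
      _ = _ := by simp only [map_sum, map_smul, smul_eq_mul]; rfl
  have hterm : ∀ i, ∫ x, c i x * fderiv ℝ w x (b i) ∂μ = -∫ x, w x ∂μ := by
    intro i
    rw [integral_mul_fderiv_eq_neg_fderiv_mul_of_hasCompactSupport μ (c i).contDiff hw hcs]
    simp only [ContinuousLinearMap.fderiv]
    simp [c]
  simp_rw [hexpand]
  rw [integral_finsetSum _ fun i _ => (c i).continuous.integrable_mul_of_hasCompactSupport μ
      (hw.continuous_fderiv_apply_const (b i)) (hcs.fderiv_apply (𝕜 := ℝ) (b i)),
    Finset.sum_congr rfl fun i _ => hterm i]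
  simp

end HaarMeasure

theorem integral_mul_laplacian_of_hasCompactSupport {N : ℕ}
    {φ u : EuclideanSpace ℝ (Fin N) → ℝ} (hφ : ContDiff ℝ 1 φ) (hu : ContDiff ℝ 2 u)
    (hcs : HasCompactSupport u) :
    ∫ x, φ x * laplacian u x =
      -∫ x, ∑ j, fderiv ℝ φ x (EuclideanSpace.basisFun (Fin N) ℝ j) *
        fderiv ℝ u x (EuclideanSpace.basisFun (Fin N) ℝ j) := by
  set e := EuclideanSpace.basisFun (Fin N) ℝ
  have hpartial : ∀ v, ContDiff ℝ 1 fun x => fderiv ℝ u x v := fun v =>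
    (hu.fderiv_right (m := 1) (by norm_num)).clm_apply contDiff_const
  have hpartial_cs : ∀ v, HasCompactSupport fun x => fderiv ℝ u x v :=
    hcs.fderiv_apply (𝕜 := ℝ)
  calc ∫ x, φ x * laplacian u x
      = ∑ j, ∫ x, φ x * fderiv ℝ (fun y => fderiv ℝ u y (e j)) x (e j) := by
        simp only [laplacian, Finset.mul_sum]
        exact integral_finsetSum _ fun j _ => hφ.continuous.integrable_mul_of_hasCompactSupport _
          ((hpartial _).continuous_fderiv_apply_const _)
          ((hpartial_cs _).fderiv_apply (𝕜 := ℝ) _)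
    _ = -∑ j, ∫ x, fderiv ℝ φ x (e j) * fderiv ℝ u x (e j) := by
        rw [← Finset.sum_neg_distrib]
        exact Finset.sum_congr rfl fun j _ =>
          integral_mul_fderiv_eq_neg_fderiv_mul_of_hasCompactSupport _ hφ (hpartial _)
            (hpartial_cs _) _
    _ = _ := by
        rw [integral_finsetSum _ fun j _ =>
          (hφ.continuous_fderiv_apply_const _).integrable_mul_of_hasCompactSupport _
            (hpartial _).continuous (hpartial_cs _)]

theorem integral_fderiv_apply_self_mul_laplacian {N : ℕ} {u : EuclideanSpace ℝ (Fin N) → ℝ}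
    (hu : ContDiff ℝ 2 u) (hcs : HasCompactSupport u) :
    ∫ x, fderiv ℝ u x x * laplacian u x =
      ((N : ℝ) - 2) / 2 * ∫ x, ‖fderiv ℝ u x‖ ^ 2 := by
  have hu1 : ContDiff ℝ 1 (fderiv ℝ u) := hu.fderiv_right (by norm_num)
  set w := fun x => ‖fderiv ℝ u x‖ ^ 2
  have hw : ContDiff ℝ 1 w := by
    simp_rw [w, ← (EuclideanSpace.basisFun (Fin N) ℝ).sum_sq_apply_eq_norm_sq]
    exact ContDiff.sum fun j _ => (hu1.clm_apply contDiff_const).pow 2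
  have hw_cs : HasCompactSupport w :=
    (hcs.fderiv (𝕜 := ℝ)).comp_left (g := fun L => ‖L‖ ^ 2) (by simp)
  have hw_deriv_int : Integrable fun x => fderiv ℝ w x x / 2 :=
    (((hw.continuous_fderiv one_ne_zero).clm_apply continuous_id').div_const 2)
      |>.integrable_of_hasCompactSupport <|
        (hw_cs.fderiv (𝕜 := ℝ)).mono fun x hx h0 => hx (by simp [h0])
  calc ∫ x, fderiv ℝ u x x * laplacian u x
      = -∫ x, (w x + fderiv ℝ w x x / 2) := by
        rw [integral_mul_laplacian_of_hasCompactSupport (φ := fun x => fderiv ℝ u x x)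
          (hu1.clm_apply contDiff_id) hu hcs]
        congr 2 with x
        exact sum_fderiv_fderiv_apply_self_mul_fderiv _ hu.contDiffAt
    _ = ((N : ℝ) - 2) / 2 * ∫ x, w x := by
        rw [integral_add (hw.continuous.integrable_of_hasCompactSupport hw_cs) hw_deriv_int,
          integral_div, integral_fderiv_apply_self_eq_neg_finrank_mul _ hw hw_cs,
          finrank_euclideanSpace_fin]
        ring

theorem pohozaev_identity_general {N : ℕ}
    (g : ℝ → ℝ) (hg : Continuous g)
    (G : ℝ → ℝ) (hG : ∀ s : ℝ, G s = ∫ τ in (0:ℝ)..s, g τ)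
    (u : EuclideanSpace ℝ (Fin N) → ℝ) (hu : ContDiff ℝ 2 u)
    (hsupp : HasCompactSupport u)
    (heq : ∀ x, laplacian u x + g (u x) = 0) :
    ((N : ℝ) - 2) * ∫ x, ‖fderiv ℝ u x‖ ^ 2 = 2 * (N : ℝ) * ∫ x, G (u x) := by
  have hG_deriv : ∀ s, HasDerivAt G (g s) s := by
    rw [funext hG]
    exact fun s => (hg.integral_hasStrictDerivAt 0 s).hasDerivAt
  have hG_C1 : ContDiff ℝ 1 G := contDiff_one_iff_deriv.2
    ⟨fun s => (hG_deriv s).differentiableAt, by simpa [funext fun s => (hG_deriv s).deriv]⟩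
  have hGu_cs : HasCompactSupport (G ∘ u) := hsupp.comp_left (by simp [hG])
  have hGu_deriv : ∀ x, fderiv ℝ (G ∘ u) x x = -(fderiv ℝ u x x * laplacian u x) := by
    intro x
    rw [((hG_deriv (u x)).comp_hasFDerivAt x
      (hu.differentiable two_ne_zero x).hasFDerivAt).fderiv]
    simp [eq_neg_of_add_eq_zero_right (heq x), mul_comm]
  calc ((N : ℝ) - 2) * ∫ x, ‖fderiv ℝ u x‖ ^ 2
      = 2 * ∫ x, fderiv ℝ u x x * laplacian u x := by
        rw [integral_fderiv_apply_self_mul_laplacian hu hsupp]; ring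
    _ = -2 * ∫ x, fderiv ℝ (G ∘ u) x x := by
        rw [funext hGu_deriv, integral_neg]; ring
    _ = 2 * (N : ℝ) * ∫ x, G (u x) := by
        rw [integral_fderiv_apply_self_eq_neg_finrank_mul _
          (hG_C1.comp (hu.of_le (by norm_num))) hGu_cs, finrank_euclideanSpace_fin]
        simp only [Function.comp_apply]
        ring

/-- Pohozaev identity for compactly supported classical solutions of `Δu + g(u) = 0`. -/
theorem pohozaev_identity {N : ℕ} (hN : 3 ≤ N)
    (g : ℝ → ℝ) (hg : Continuous g)
    (G : ℝ → ℝ) (hG : ∀ s : ℝ, G s = ∫ τ in (0:ℝ)..s, g τ)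
    (u : EuclideanSpace ℝ (Fin N) → ℝ) (hu : ContDiff ℝ 2 u)
    (hsupp : HasCompactSupport u)
    (heq : ∀ x, laplacian u x + g (u x) = 0) :
    ((N : ℝ) - 2) * ∫ x, ‖fderiv ℝ u x‖ ^ 2 = 2 * (N : ℝ) * ∫ x, G (u x) :=
  pohozaev_identity_general g hg G hG u hu hsupp heq
end

section
/- Let N ≥ 3, λ > 0, let F : ℝ → ℝ be Borel measurable with G(s) := F(s) − (λ/2)s², and let u : EuclideanSpace ℝ (Fin N) → ℝ be differentiable such that ‖∇u‖², u² and F∘u are integrable, 0 < ∫_{ℝ^N} ‖∇u‖² dx, and ∫_{ℝ^N} G(u) dx > 0. Then there exists a unique t₀ > 0 such that the rescaled function u(·/t₀) satisfies the Pohozaev constraint (N−2) ∫_{ℝ^N} ‖∇(u(x/t₀))‖² dx = 2N ∫_{ℝ^N} G(u(x/t₀)) dx; this t₀ is given explicitly by t₀² = (N−2) ∫_{ℝ^N} ‖∇u‖² dx / (2N ∫_{ℝ^N} G(u) dx), and t₀ is the unique maximizer over (0,∞) of the map t ↦ I(u(·/t)). -/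
/-! Dilating by `t` scales `∫ ‖∇u‖²` by `t ^ (N - 2)` and every integral `∫ H(u)` by `t ^ N`.
Hence along the dilations of `u` the energy is the one-variable function
`t ↦ (a / 2) t ^ (N - 2) - b t ^ N` with `a = ∫ ‖∇u‖²` and `b = ∫ G(u)`, and the Pohozaev
constraint is the equation of its critical points, which for `a, b > 0` has exactly one positive
root, the strict global maximum on `(0, ∞)`. -/

open MeasureTheory Module

theorem mul_pow_sub_two_sub_mul_pow_lt {n : ℕ} (hn : 3 ≤ n) {A B t₀ t : ℝ} (hB : 0 < B)
    (ht₀ : 0 < t₀) (hcrit : n * B * t₀ ^ 2 = (n - 2) * A) (ht : 0 < t) (hne : t ≠ t₀) :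
    A * t ^ (n - 2) - B * t ^ n < A * t₀ ^ (n - 2) - B * t₀ ^ n := by
  obtain ⟨k, rfl⟩ : ∃ k, n = k + 3 := ⟨n - 3, by omega⟩
  simp only [show k + 3 - 2 = k + 1 by omega] at hcrit ⊢
  set φ : ℝ → ℝ := fun s => A * s ^ (k + 1) - B * s ^ (k + 3)
  have hφ' : ∀ s, HasDerivAt φ ((k + 3) * B * s ^ k * (t₀ ^ 2 - s ^ 2)) s := by
    intro s
    refine (((hasDerivAt_pow (k + 1) s).const_mul A).sub
      ((hasDerivAt_pow (k + 3) s).const_mul B)).congr_deriv ?_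
    simp only [Nat.add_sub_cancel, show k + 3 - 1 = k + 2 from rfl]
    push_cast at hcrit ⊢
    linear_combination -s ^ k * hcrit
  have hφ : Continuous φ := by fun_prop
  have hfactor_pos : ∀ s, 0 < s → 0 < (k + 3) * B * s ^ k := fun s hs => by positivity
  rcases hne.lt_or_gt with hlt | hgt
  · have hmono : StrictMonoOn φ (Set.Icc 0 t₀) := by
      refine strictMonoOn_of_deriv_pos (convex_Icc 0 t₀) hφ.continuousOn fun s hs => ?_
      rw [interior_Icc] at hs
      rw [(hφ' s).deriv]
      exact mul_pos (hfactor_pos s hs.1)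
        (sub_pos.2 (pow_lt_pow_left₀ hs.2 hs.1.le two_ne_zero))
    exact hmono ⟨ht.le, hlt.le⟩ ⟨ht₀.le, le_rfl⟩ hlt
  · have hanti : StrictAntiOn φ (Set.Ici t₀) := by
      refine strictAntiOn_of_deriv_neg (convex_Ici t₀) hφ.continuousOn fun s hs => ?_
      rw [interior_Ici] at hs
      rw [(hφ' s).deriv]
      exact mul_neg_of_pos_of_neg (hfactor_pos s (ht₀.trans hs))
        (sub_neg.2 (pow_lt_pow_left₀ hs ht₀.le two_ne_zero))
    exact hanti Set.self_mem_Ici hgt.le hgt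

theorem pohozaev_scaling_iff {n : ℕ} (hn : 2 ≤ n) {a b t : ℝ} (hb : b ≠ 0) (ht : 0 < t) :
    (n - 2) * (t ^ (n - 2) * a) = 2 * n * (t ^ n * b) ↔ t ^ 2 = (n - 2) * a / (2 * n * b) := by
  have hpow : t ^ n = t ^ (n - 2) * t ^ 2 := by rw [← pow_add, Nat.sub_add_cancel hn]
  rw [hpow, eq_div_iff (by positivity)]
  constructor
  · intro h
    have h' : t ^ (n - 2) * (t ^ 2 * (2 * n * b)) = t ^ (n - 2) * ((n - 2) * a) := by
      linear_combination -h
    exact mul_left_cancel₀ (pow_ne_zero (n - 2) ht.ne') h'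
  · intro h
    linear_combination -t ^ (n - 2) * h

theorem norm_fderiv_comp_inv_smul_sq {E : Type*} [NormedAddCommGroup E] [NormedSpace ℝ E]
    (u : E → ℝ) (t : ℝ) (x : E) :
    ‖fderiv ℝ (fun y => u (t⁻¹ • y)) x‖ ^ 2 = (t ^ 2)⁻¹ * ‖fderiv ℝ u (t⁻¹ • x)‖ ^ 2 := by
  rw [fderiv_comp_smul, norm_smul, mul_pow, Real.norm_eq_abs, sq_abs, inv_pow]

section Dilation

variable {E : Type*} [NormedAddCommGroup E] [NormedSpace ℝ E] [FiniteDimensional ℝ E]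
  [MeasurableSpace E] [BorelSpace E] {μ : Measure E} [μ.IsAddHaarMeasure] {t : ℝ}

theorem integral_comp_inv_smul_of_pos (f : E → ℝ) (ht : 0 < t) :
    ∫ x, f (t⁻¹ • x) ∂μ = t ^ finrank ℝ E * ∫ x, f x ∂μ :=
  Measure.integral_comp_inv_smul_of_nonneg μ f ht.le

theorem MeasureTheory.Integrable.norm_fderiv_comp_inv_smul_sq {u : E → ℝ}
    (hu : Integrable (fun x => ‖fderiv ℝ u x‖ ^ 2) μ) (ht : t ≠ 0) :
    Integrable (fun x => ‖fderiv ℝ (fun y => u (t⁻¹ • y)) x‖ ^ 2) μ := by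
  simp_rw [_root_.norm_fderiv_comp_inv_smul_sq]
  exact (hu.comp_smul (inv_ne_zero ht)).const_mul _

theorem integral_norm_fderiv_comp_inv_smul_sq (u : E → ℝ) (ht : 0 < t)
    (hE : 2 ≤ finrank ℝ E) :
    ∫ x, ‖fderiv ℝ (fun y => u (t⁻¹ • y)) x‖ ^ 2 ∂μ =
      t ^ (finrank ℝ E - 2) * ∫ x, ‖fderiv ℝ u x‖ ^ 2 ∂μ := by
  simp_rw [norm_fderiv_comp_inv_smul_sq, integral_const_mul]
  rw [integral_comp_inv_smul_of_pos (fun x => ‖fderiv ℝ u x‖ ^ 2) ht,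
    ← Nat.sub_add_cancel hE, Nat.add_sub_cancel, pow_add]
  field_simp

theorem energy_comp_inv_smul {u : E → ℝ} {F G : ℝ → ℝ} {lam : ℝ}
    (hG : ∀ s, G s = F s - lam / 2 * s ^ 2)
    (hgrad : Integrable (fun x => ‖fderiv ℝ u x‖ ^ 2) μ) (hsq : Integrable (fun x => u x ^ 2) μ)
    (hFu : Integrable (fun x => F (u x)) μ) (ht : 0 < t) (hE : 2 ≤ finrank ℝ E) :
    1 / 2 * ∫ x, (‖fderiv ℝ (fun y => u (t⁻¹ • y)) x‖ ^ 2 + lam * u (t⁻¹ • x) ^ 2) ∂μ -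
        ∫ x, F (u (t⁻¹ • x)) ∂μ =
      (∫ x, ‖fderiv ℝ u x‖ ^ 2 ∂μ) / 2 * t ^ (finrank ℝ E - 2) -
        (∫ x, G (u x) ∂μ) * t ^ finrank ℝ E := by
  have hGu : ∫ x, G (u x) ∂μ = ∫ x, F (u x) ∂μ - lam / 2 * ∫ x, u x ^ 2 ∂μ := by
    simp_rw [hG]
    rw [integral_sub hFu (hsq.const_mul _), integral_const_mul]
  rw [integral_add (hgrad.norm_fderiv_comp_inv_smul_sq ht.ne')
      ((hsq.comp_smul (inv_ne_zero ht.ne')).const_mul lam), integral_const_mul,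
    integral_norm_fderiv_comp_inv_smul_sq u ht hE,
    integral_comp_inv_smul_of_pos (fun x => u x ^ 2) ht,
    integral_comp_inv_smul_of_pos (fun x => F (u x)) ht, hGu]
  ring

end Dilation

theorem pohozaev_projection_general {N : ℕ} (hN : 3 ≤ N)
    (lam : ℝ)
    (F G : ℝ → ℝ)
    (hG : ∀ s : ℝ, G s = F s - lam / 2 * s ^ 2)
    (u : EuclideanSpace ℝ (Fin N) → ℝ)
    (hgrad : Integrable (fun x => ‖fderiv ℝ u x‖ ^ 2))
    (hsq : Integrable (fun x => (u x) ^ 2))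
    (hFu : Integrable (fun x => F (u x)))
    (hgradpos : 0 < ∫ x, ‖fderiv ℝ u x‖ ^ 2)
    (hGpos : 0 < ∫ x, G (u x)) :
    ∃ t₀ : ℝ, 0 < t₀ ∧
      (((N : ℝ) - 2) * ∫ x, ‖fderiv ℝ (fun y => u (t₀⁻¹ • y)) x‖ ^ 2 =
        2 * (N : ℝ) * ∫ x, G (u (t₀⁻¹ • x))) ∧
      (∀ t : ℝ, 0 < t →
        (((N : ℝ) - 2) * ∫ x, ‖fderiv ℝ (fun y => u (t⁻¹ • y)) x‖ ^ 2 =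
          2 * (N : ℝ) * ∫ x, G (u (t⁻¹ • x))) → t = t₀) ∧
      t₀ ^ 2 = ((N : ℝ) - 2) * (∫ x, ‖fderiv ℝ u x‖ ^ 2) /
        (2 * (N : ℝ) * ∫ x, G (u x)) ∧
      (∀ t : ℝ, 0 < t → t ≠ t₀ →
        ((1 : ℝ) / 2) *
            (∫ x, (‖fderiv ℝ (fun y => u (t⁻¹ • y)) x‖ ^ 2 + lam * (u (t⁻¹ • x)) ^ 2)) -
          (∫ x, F (u (t⁻¹ • x))) <
        ((1 : ℝ) / 2) *
            (∫ x, (‖fderiv ℝ (fun y => u (t₀⁻¹ • y)) x‖ ^ 2 + lam * (u (t₀⁻¹ • x)) ^ 2)) -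
          ∫ x, F (u (t₀⁻¹ • x))) := by
  have hdim : 2 ≤ finrank ℝ (EuclideanSpace ℝ (Fin N)) := by
    rw [finrank_euclideanSpace_fin]; omega
  have hpoh : ∀ t : ℝ, 0 < t →
      (((N : ℝ) - 2) * ∫ x, ‖fderiv ℝ (fun y => u (t⁻¹ • y)) x‖ ^ 2 =
          2 * (N : ℝ) * ∫ x, G (u (t⁻¹ • x)) ↔
        t ^ 2 = ((N : ℝ) - 2) * (∫ x, ‖fderiv ℝ u x‖ ^ 2) / (2 * (N : ℝ) * ∫ x, G (u x))) := by
    intro t ht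
    rw [integral_norm_fderiv_comp_inv_smul_sq u ht hdim,
      integral_comp_inv_smul_of_pos (fun x => G (u x)) ht, finrank_euclideanSpace_fin]
    exact pohozaev_scaling_iff (by omega) hGpos.ne' ht
  set t₀ := √(((N : ℝ) - 2) * (∫ x, ‖fderiv ℝ u x‖ ^ 2) / (2 * (N : ℝ) * ∫ x, G (u x)))
  have hN2 : (0 : ℝ) < N - 2 := by
    have : (3 : ℝ) ≤ N := by exact_mod_cast hN
    linarith
  have ht₀ : 0 < t₀ := Real.sqrt_pos.2 (by positivity)
  have ht₀sq : t₀ ^ 2 = _ := Real.sq_sqrt (by positivity)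
  refine ⟨t₀, ht₀, (hpoh t₀ ht₀).2 ht₀sq, fun t ht h => ?_, ht₀sq, fun t ht hne => ?_⟩
  · exact (pow_left_inj₀ ht.le ht₀.le two_ne_zero).1 (((hpoh t ht).1 h).trans ht₀sq.symm)
  · rw [energy_comp_inv_smul hG hgrad hsq hFu ht hdim,
      energy_comp_inv_smul hG hgrad hsq hFu ht₀ hdim, finrank_euclideanSpace_fin]
    refine mul_pow_sub_two_sub_mul_pow_lt hN hGpos ht₀ ?_ ht hne
    rw [ht₀sq]
    field_simp

/-- Unique projection onto the Pohozaev manifold: if `∫‖∇u‖² > 0` and `∫G(u) > 0`,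
there is a unique `t₀ > 0` such that `u(·/t₀)` satisfies the Pohozaev constraint;
`t₀² = (N−2)∫‖∇u‖² / (2N∫G(u))`, and `t₀` is the unique maximizer of `t ↦ I(u(·/t))`
over `(0,∞)`. -/
theorem pohozaev_projection {N : ℕ} (hN : 3 ≤ N)
    (lam : ℝ) (hlam : 0 < lam)
    (F G : ℝ → ℝ) (hF : Measurable F)
    (hG : ∀ s : ℝ, G s = F s - lam / 2 * s ^ 2)
    (u : EuclideanSpace ℝ (Fin N) → ℝ) (hu : Differentiable ℝ u)
    (hgrad : Integrable (fun x => ‖fderiv ℝ u x‖ ^ 2))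
    (hsq : Integrable (fun x => (u x) ^ 2))
    (hFu : Integrable (fun x => F (u x)))
    (hgradpos : 0 < ∫ x, ‖fderiv ℝ u x‖ ^ 2)
    (hGpos : 0 < ∫ x, G (u x)) :
    ∃ t₀ : ℝ, 0 < t₀ ∧
      (((N : ℝ) - 2) * ∫ x, ‖fderiv ℝ (fun y => u (t₀⁻¹ • y)) x‖ ^ 2 =
        2 * (N : ℝ) * ∫ x, G (u (t₀⁻¹ • x))) ∧
      (∀ t : ℝ, 0 < t →
        (((N : ℝ) - 2) * ∫ x, ‖fderiv ℝ (fun y => u (t⁻¹ • y)) x‖ ^ 2 =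
          2 * (N : ℝ) * ∫ x, G (u (t⁻¹ • x))) → t = t₀) ∧
      t₀ ^ 2 = ((N : ℝ) - 2) * (∫ x, ‖fderiv ℝ u x‖ ^ 2) /
        (2 * (N : ℝ) * ∫ x, G (u x)) ∧
      (∀ t : ℝ, 0 < t → t ≠ t₀ →
        ((1 : ℝ) / 2) *
            (∫ x, (‖fderiv ℝ (fun y => u (t⁻¹ • y)) x‖ ^ 2 + lam * (u (t⁻¹ • x)) ^ 2)) -
          (∫ x, F (u (t⁻¹ • x))) <
        ((1 : ℝ) / 2) *
            (∫ x, (‖fderiv ℝ (fun y => u (t₀⁻¹ • y)) x‖ ^ 2 + lam * (u (t₀⁻¹ • x)) ^ 2)) -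
          ∫ x, F (u (t₀⁻¹ • x))) :=
  pohozaev_projection_general hN lam F G hG u hgrad hsq hFu hgradpos hGpos
end

section
/- Let N ≥ 1 and let G : ℝ → ℝ be continuous with G(0) = 0, and suppose there exists ξ > 0 with G(ξ) > 0. Then there exists a Lipschitz continuous function u : EuclideanSpace ℝ (Fin N) → ℝ with compact support, with 0 ≤ u(x) ≤ ξ for all x, such that G∘u is integrable and ∫_{ℝ^N} G(u(x)) dx > 0. -/
/-!
Take a smooth bump `f` equal to `1` on the closed unit ball and vanishing outside the closed
ball of radius `R > 1`, and put `u = ξ f`. On the unit ball `G ∘ u = G ξ > 0`, while on the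
annulus `|G ∘ u| ≤ M := sup_{[0, ξ]} |G|`; the annulus has volume
`(R ^ N - 1) |B₁|`, which tends to `0` as `R → 1⁺`, so `∫ G ∘ u > 0` for `R` close to `1`.
-/

open MeasureTheory Measure Metric Set Filter Topology Module

theorem le_integral_comp_of_eqOn_of_eq_zero_off {α : Type*} [MeasurableSpace α]
    (μ : Measure α) {G : ℝ → ℝ} (hG0 : G 0 = 0) {ξ M : ℝ}
    (hM : ∀ t ∈ Icc 0 ξ, ‖G t‖ ≤ M)
    {u : α → ℝ} (hu : ∀ x, u x ∈ Icc 0 ξ) {A B : Set α} (hA : MeasurableSet A)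
    (hBA : μ (B \ A) ≠ ⊤) (huA : ∀ x ∈ A, u x = ξ) (huB : ∀ x ∉ B, u x = 0)
    (hint : Integrable (fun x => G (u x)) μ) :
    μ.real A * G ξ - M * μ.real (B \ A) ≤ ∫ x, G (u x) ∂μ := by
  have h_on_A : ∫ x in A, G (u x) ∂μ = μ.real A * G ξ := by
    rw [setIntegral_congr_fun hA (g := fun _ => G ξ) fun x hx => by simp only [huA x hx],
      setIntegral_const, smul_eq_mul]
  have h_off_A : ∫ x in Aᶜ, G (u x) ∂μ = ∫ x in B \ A, G (u x) ∂μ :=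
    setIntegral_eq_of_subset_of_forall_sdiff_eq_zero hA.compl (fun x hx => hx.2)
      fun x hx => by rw [huB x fun hB => hx.2 ⟨hB, hx.1⟩, hG0]
  have h_annulus : ‖∫ x in B \ A, G (u x) ∂μ‖ ≤ M * μ.real (B \ A) :=
    norm_setIntegral_le_of_norm_le_const hBA.lt_top fun x _ => hM _ (hu x)
  rw [← integral_add_compl hA hint, h_on_A, h_off_A]
  linarith [neg_abs_le (∫ x in B \ A, G (u x) ∂μ),
    (Real.norm_eq_abs _).symm.le.trans h_annulus]

section Haar

variable {E : Type*} [NormedAddCommGroup E] [NormedSpace ℝ E] [MeasurableSpace E] [BorelSpace E]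
  [FiniteDimensional ℝ E] (μ : Measure E) [μ.IsAddHaarMeasure]

theorem addHaar_real_closedBall_diff_closedBall (c : E) {r R : ℝ} (hr : 0 ≤ r) (hrR : r ≤ R) :
    μ.real (closedBall c R \ closedBall c r) =
      (R ^ finrank ℝ E - r ^ finrank ℝ E) * μ.real (ball 0 1) := by
  rw [measureReal_sdiff (closedBall_subset_closedBall hrR) measurableSet_closedBall
    measure_closedBall_lt_top.ne, addHaar_real_closedBall μ c (hr.trans hrR),
    addHaar_real_closedBall μ c hr]
  ring

theorem ContDiffBump.le_integral_comp_const_mul [HasContDiffBump E] {c : E} (f : ContDiffBump c)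
    {G : ℝ → ℝ} (hG : Continuous G) (hG0 : G 0 = 0) {ξ M : ℝ} (hξ : 0 ≤ ξ)
    (hM : ∀ t ∈ Icc 0 ξ, ‖G t‖ ≤ M) :
    μ.real (ball 0 1) * (f.rIn ^ finrank ℝ E * G ξ - M * (f.rOut ^ finrank ℝ E -
      f.rIn ^ finrank ℝ E)) ≤ ∫ x, G (ξ * f x) ∂μ := by
  have hu : ∀ x, ξ * f x ∈ Icc 0 ξ := fun x =>
    ⟨mul_nonneg hξ f.nonneg, mul_le_of_le_one_right hξ f.le_one⟩
  have hint : Integrable (fun x => G (ξ * f x)) μ :=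
    (hG.comp (continuous_const.mul f.continuous)).integrable_of_hasCompactSupport
      (f.hasCompactSupport.mul_left.comp_left hG0)
  have key := le_integral_comp_of_eqOn_of_eq_zero_off μ hG0 hM hu measurableSet_closedBall
    (measure_ne_top_of_subset sdiff_subset measure_closedBall_lt_top.ne)
    (fun x hx => by rw [f.one_of_mem_closedBall hx, mul_one])
    (fun x hx => by rw [f.zero_of_le_dist (not_le.mp hx).le, mul_zero]) hint
  rw [addHaar_real_closedBall_diff_closedBall μ c f.rIn_pos.le f.rIn_lt_rOut.le,
    addHaar_real_closedBall μ c f.rIn_pos.le] at key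
  linarith

end Haar

theorem exists_bump_with_positive_G_general {N : ℕ}
    (G : ℝ → ℝ) (hG : Continuous G) (hG0 : G 0 = 0)
    (ξ : ℝ) (hξ : 0 < ξ) (hGξ : 0 < G ξ) :
    ∃ u : EuclideanSpace ℝ (Fin N) → ℝ,
      (∃ K : NNReal, LipschitzWith K u) ∧
      HasCompactSupport u ∧
      (∀ x, 0 ≤ u x ∧ u x ≤ ξ) ∧
      Integrable (fun x => G (u x)) ∧
      0 < ∫ x, G (u x) := by
  obtain ⟨M, hM⟩ := isCompact_Icc.exists_bound_of_continuousOn (hG.continuousOn (s := Icc 0 ξ))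
  have h_small : ∀ᶠ R in 𝓝[>] (1 : ℝ), M * (R ^ N - 1) < G ξ := by
    have : Tendsto (fun R : ℝ => M * (R ^ N - 1)) (𝓝 1) (𝓝 0) := by
      simpa using
        ((continuous_pow N).sub (continuous_const (y := (1 : ℝ)))).const_mul M |>.tendsto 1
    exact nhdsWithin_le_nhds (this.eventually (gt_mem_nhds hGξ))
  obtain ⟨R, hR_small, hR⟩ := (h_small.and self_mem_nhdsWithin).exists
  let f : ContDiffBump (0 : EuclideanSpace ℝ (Fin N)) := ⟨1, R, one_pos, hR⟩
  have hsupp : HasCompactSupport fun x => ξ * f x := f.hasCompactSupport.mul_left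
  refine ⟨fun x => ξ * f x,
    (contDiff_const.mul f.contDiff).lipschitzWith_of_hasCompactSupport hsupp (n := 1) one_ne_zero,
    hsupp, fun x => ⟨mul_nonneg hξ.le f.nonneg, mul_le_of_le_one_right hξ.le f.le_one⟩,
    (hG.comp (continuous_const.mul f.continuous)).integrable_of_hasCompactSupport
      (hsupp.comp_left hG0), ?_⟩
  refine lt_of_lt_of_le ?_ (f.le_integral_comp_const_mul volume hG hG0 hξ.le hM)
  have hball : 0 < volume.real (ball (0 : EuclideanSpace ℝ (Fin N)) 1) :=
    ENNReal.toReal_pos (measure_ball_pos volume 0 one_pos).ne' measure_ball_lt_top.ne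
  simp only [finrank_euclideanSpace_fin, one_pow, one_mul, f]
  exact mul_pos hball (by linarith)

/-- Nonemptiness of the Pohozaev manifold: if `G` is continuous, `G 0 = 0` and
`G ξ > 0` for some `ξ > 0`, then there is a Lipschitz compactly supported function
`u` with values in `[0, ξ]` such that `G ∘ u` is integrable and `∫ G(u) > 0`. -/
theorem exists_bump_with_positive_G {N : ℕ} (hN : 1 ≤ N)
    (G : ℝ → ℝ) (hG : Continuous G) (hG0 : G 0 = 0)
    (ξ : ℝ) (hξ : 0 < ξ) (hGξ : 0 < G ξ) :
    ∃ u : EuclideanSpace ℝ (Fin N) → ℝ,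
      (∃ K : NNReal, LipschitzWith K u) ∧
      HasCompactSupport u ∧
      (∀ x, 0 ≤ u x ∧ u x ≤ ξ) ∧
      Integrable (fun x => G (u x)) ∧
      0 < ∫ x, G (u x) :=
  exists_bump_with_positive_G_general G hG hG0 ξ hξ hGξ
end

section
/- Let N ≥ 3, λ > 0, let p satisfy 2 < p < 2N/(N−2), and set M := min{1, λN/(N−2)}. Let ε₀ > 0 and C₁ > 0 satisfy (2N/(N−2)) ε₀ < M, and let F : ℝ → ℝ be Borel measurable with |F(s)| ≤ (ε₀/2) s² + C₁ |s|^p for all s. Then there exists σ > 0 such that every nonzero continuously differentiable compactly supported function u : EuclideanSpace ℝ (Fin N) → ℝ satisfying the Pohozaev constraint (N−2) ∫_{ℝ^N} ‖∇u‖² dx = 2N ∫_{ℝ^N} (F(u) − (λ/2)u²) dx must satisfy ∫_{ℝ^N} (‖∇u‖² + u²) dx ≥ σ. -/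
/-!
Write `q = 2N/(N-2)` for the Sobolev exponent and `X = ∫ (‖∇u‖² + u²)`. On the Pohozaev
manifold, `M ≤ min 1 (λN/(N-2))` and the growth bound on `F` give
`(M - q ε₀) X ≤ q C₁ ∫ |u|^p`. Since `2 < p < q`, the pointwise interpolation
`|s|^p ≤ δ s² + C_δ |s|^q` together with the Sobolev inequality `∫ |u|^q ≤ C (∫ ‖∇u‖²)^(q/2)`
bounds the right-hand side by `(M - q ε₀)/2 · X + K X^(q/2)`. As `q/2 > 1`, this forces
`X ≥ ((M - q ε₀)/(2K))^(2/(q-2))` whenever `u ≠ 0`.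
-/

open MeasureTheory Module
open scoped NNReal

theorem Real.rpow_le_mul_rpow_add_mul_rpow {r p q t x : ℝ} (hr : 0 < r) (hrp : r ≤ p)
    (hpq : p ≤ q) (ht : 0 < t) (hx : 0 ≤ x) :
    x ^ p ≤ t ^ (p - r) * x ^ r + t ^ (p - q) * x ^ q := by
  have hp : p ≠ 0 := (hr.trans_le hrp).ne'
  rcases le_total x t with hxt | htx
  · calc x ^ p = x ^ (p - r) * x ^ r := by
          rw [← Real.rpow_add' hx (by simpa using hp), sub_add_cancel]
      _ ≤ t ^ (p - r) * x ^ r := by gcongr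
      _ ≤ _ := le_add_of_nonneg_right (by positivity)
  · calc x ^ p = x ^ (p - q) * x ^ q := by
          rw [← Real.rpow_add' hx (by simpa using hp), sub_add_cancel]
      _ ≤ t ^ (p - q) * x ^ q := by
          gcongr ?_ * _
          exact Real.rpow_le_rpow_of_nonpos ht htx (sub_nonpos.2 hpq)
      _ ≤ _ := le_add_of_nonneg_left (by positivity)

theorem Real.exists_rpow_le_mul_rpow_add_mul_rpow {r p q δ : ℝ} (hr : 0 < r) (hrp : r < p)
    (hpq : p ≤ q) (hδ : 0 < δ) :
    ∃ C, 0 < C ∧ ∀ x, 0 ≤ x → x ^ p ≤ δ * x ^ r + C * x ^ q := by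
  set t := δ ^ (p - r)⁻¹
  have ht : 0 < t := by positivity
  refine ⟨t ^ (p - q), by positivity, fun x hx => ?_⟩
  have htδ : t ^ (p - r) = δ := Real.rpow_inv_rpow hδ.le (sub_pos.2 hrp).ne'
  simpa [htδ] using Real.rpow_le_mul_rpow_add_mul_rpow hr hrp.le hpq ht hx

theorem Real.rpow_inv_le_of_mul_le_mul_rpow {a K x r : ℝ} (ha : 0 < a) (hK : 0 < K)
    (hx : 0 < x) (hr : 1 < r) (h : a * x ≤ K * x ^ r) : (a / K) ^ (r - 1)⁻¹ ≤ x := by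
  have hr' : 0 < r - 1 := sub_pos.2 hr
  have : a / K ≤ x ^ (r - 1) := by
    rw [div_le_iff₀ hK, Real.rpow_sub_one hx.ne', div_mul_eq_mul_div, le_div_iff₀ hx]
    linarith [mul_comm K (x ^ r)]
  calc (a / K) ^ (r - 1)⁻¹ ≤ (x ^ (r - 1)) ^ (r - 1)⁻¹ := by gcongr
    _ = x := Real.rpow_rpow_inv hx.le hr'.ne'

section Integrability
variable {X : Type*} [TopologicalSpace X] [MeasurableSpace X] [OpensMeasurableSpace X]
  {μ : Measure X} [IsFiniteMeasureOnCompacts μ]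

theorem Continuous.integrable_comp_of_hasCompactSupport {β : Type*} [TopologicalSpace β] [Zero β]
    {f : X → β} {g : β → ℝ} (hf : Continuous f) (hfs : HasCompactSupport f) (hg : Continuous g)
    (hg0 : g 0 = 0) : Integrable (fun x => g (f x)) μ :=
  (hg.comp hf).integrable_of_hasCompactSupport (hfs.comp_left hg0)

theorem integral_sq_pos_of_ne_zero [μ.IsOpenPosMeasure] {u : X → ℝ} (hu : Continuous u)
    (hus : HasCompactSupport u) (hu0 : u ≠ 0) : 0 < ∫ x, u x ^ 2 ∂μ := by
  obtain ⟨x₀, hx₀⟩ := Function.ne_iff.1 hu0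
  exact (hu.pow 2).integral_pos_of_hasCompactSupport_nonneg_nonzero
    (hus.comp_left (zero_pow two_ne_zero)) (fun x => sq_nonneg _) (pow_ne_zero 2 hx₀)

theorem integral_norm_fderiv_sq_add_sq {E : Type*} [NormedAddCommGroup E] [NormedSpace ℝ E]
    [MeasurableSpace E] [OpensMeasurableSpace E] {μ : Measure E} [IsFiniteMeasureOnCompacts μ]
    {u : E → ℝ} (hu : ContDiff ℝ 1 u) (hus : HasCompactSupport u) :
    ∫ x, (‖fderiv ℝ u x‖ ^ 2 + u x ^ 2) ∂μ = ∫ x, ‖fderiv ℝ u x‖ ^ 2 ∂μ + ∫ x, u x ^ 2 ∂μ :=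
  integral_add
    ((hu.continuous_fderiv one_ne_zero).integrable_comp_of_hasCompactSupport
      (hus.fderiv (𝕜 := ℝ)) (continuous_norm.pow 2) (by simp))
    (hu.continuous.integrable_comp_of_hasCompactSupport hus (continuous_pow 2)
      (zero_pow two_ne_zero))

end Integrability

section Sobolev
variable {E F : Type*} [NormedAddCommGroup E] [NormedSpace ℝ E] [MeasurableSpace E] [BorelSpace E]
  [FiniteDimensional ℝ E] (μ : Measure E) [μ.IsAddHaarMeasure]
  [NormedAddCommGroup F] [NormedSpace ℝ F] [FiniteDimensional ℝ F]

theorem exists_integral_norm_rpow_le_integral_norm_fderiv_rpow {p p' : ℝ} (hp : 1 ≤ p)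
    (hpn : p < finrank ℝ E) (hp' : p'⁻¹ = p⁻¹ - (finrank ℝ E : ℝ)⁻¹) :
    ∃ C, 0 < C ∧ ∀ u : E → F, ContDiff ℝ 1 u → HasCompactSupport u →
      ∫ x, ‖u x‖ ^ p' ∂μ ≤ C * (∫ x, ‖fderiv ℝ u x‖ ^ p ∂μ) ^ (p' / p) := by
  have hp0 : 0 < p := by linarith
  have hp'0 : 0 < p' := by
    rw [← inv_pos, hp', sub_pos]
    exact inv_strictAnti₀ hp0 hpn
  obtain ⟨C, hC⟩ : ∃ C : ℝ≥0, ∀ u : E → F, ContDiff ℝ 1 u → HasCompactSupport u →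
      eLpNorm u (p'.toNNReal) μ ≤ C * eLpNorm (fderiv ℝ u) (p.toNNReal) μ :=
    ⟨_, fun u hu hus => eLpNorm_le_eLpNorm_fderiv_of_eq μ hu hus (Real.one_le_toNNReal.2 hp)
      (by exact_mod_cast hp0.trans hpn)
      (by push_cast [Real.coe_toNNReal _ hp0.le, Real.coe_toNNReal _ hp'0.le]; exact hp')⟩
  refine ⟨((C : ℝ) + 1) ^ p', by positivity, fun u hu hus => ?_⟩
  have hu_mem : MemLp u (p'.toNNReal) μ := hu.continuous.memLp_of_hasCompactSupport hus
  have hDu_mem : MemLp (fderiv ℝ u) (p.toNNReal) μ :=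
    (hu.continuous_fderiv one_ne_zero).memLp_of_hasCompactSupport (hus.fderiv (𝕜 := ℝ))
  have hCu := hC u hu hus
  rw [hu_mem.eLpNorm_eq_integral_rpow_norm (by simpa using hp'0) ENNReal.coe_ne_top,
    hDu_mem.eLpNorm_eq_integral_rpow_norm (by simpa using hp0) ENNReal.coe_ne_top] at hCu
  simp only [ENNReal.coe_toReal, Real.coe_toNNReal _ hp0.le, Real.coe_toNNReal _ hp'0.le] at hCu
  rw [← ENNReal.ofReal_coe_nnreal, ← ENNReal.ofReal_mul C.coe_nonneg,
    ENNReal.ofReal_le_ofReal_iff (by positivity)] at hCu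
  have hA : 0 ≤ ∫ x, ‖u x‖ ^ p' ∂μ := integral_nonneg fun _ => by positivity
  have hB : 0 ≤ ∫ x, ‖fderiv ℝ u x‖ ^ p ∂μ := integral_nonneg fun _ => by positivity
  calc ∫ x, ‖u x‖ ^ p' ∂μ = ((∫ x, ‖u x‖ ^ p' ∂μ) ^ p'⁻¹) ^ p' :=
        (Real.rpow_inv_rpow hA hp'0.ne').symm
    _ ≤ (((C : ℝ) + 1) * (∫ x, ‖fderiv ℝ u x‖ ^ p ∂μ) ^ p⁻¹) ^ p' := by
        gcongr
        exact hCu.trans (by gcongr; linarith)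
    _ = ((C : ℝ) + 1) ^ p' * (∫ x, ‖fderiv ℝ u x‖ ^ p ∂μ) ^ (p' / p) := by
        rw [Real.mul_rpow (by positivity) (by positivity), ← Real.rpow_mul hB, inv_mul_eq_div]

theorem exists_integral_abs_rpow_le_mul_integral_sq_add {p δ : ℝ} (hn : 2 < finrank ℝ E)
    (hp : 2 < p) (hpq : p < 2 * finrank ℝ E / ((finrank ℝ E : ℝ) - 2)) (hδ : 0 < δ) :
    ∃ C, 0 < C ∧ ∀ u : E → ℝ, ContDiff ℝ 1 u → HasCompactSupport u →
      ∫ x, |u x| ^ p ∂μ ≤ δ * ∫ x, u x ^ 2 ∂μ +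
        C * (∫ x, ‖fderiv ℝ u x‖ ^ 2 ∂μ) ^ ((finrank ℝ E : ℝ) / (finrank ℝ E - 2)) := by
  have hn2 : (2 : ℝ) < finrank ℝ E := by exact_mod_cast hn
  set n : ℝ := (finrank ℝ E : ℝ)
  set q := 2 * n / (n - 2) with hq_def
  have hq : 0 < q := by positivity
  have hexp : q / 2 = n / (n - 2) := by rw [hq_def]; field_simp
  obtain ⟨CS, hCS, hSob⟩ := exists_integral_norm_rpow_le_integral_norm_fderiv_rpow μ (F := ℝ)
    (p := 2) (p' := q) one_le_two hn2 (by rw [hq_def]; field_simp; ring)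
  obtain ⟨Cδ, hCδ, hinterp⟩ := Real.exists_rpow_le_mul_rpow_add_mul_rpow two_pos hp hpq.le hδ
  refine ⟨Cδ * CS, by positivity, fun u hu hus => ?_⟩
  have hcont := hu.continuous
  have hsq : Integrable (fun x => u x ^ 2) μ :=
    hcont.integrable_comp_of_hasCompactSupport hus (continuous_pow 2) (zero_pow two_ne_zero)
  have hpow : ∀ r : ℝ, 0 < r → Integrable (fun x => |u x| ^ r) μ := fun r hr =>
    hcont.integrable_comp_of_hasCompactSupport hus
      (continuous_abs.rpow_const fun _ => Or.inr hr.le) (by simp [hr.ne'])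
  calc ∫ x, |u x| ^ p ∂μ ≤ ∫ x, δ * u x ^ 2 + Cδ * |u x| ^ q ∂μ := by
        refine integral_mono (hpow p (by linarith))
          ((hsq.const_mul δ).add ((hpow q hq).const_mul Cδ)) fun x => ?_
        simpa [Real.rpow_two, sq_abs] using hinterp |u x| (abs_nonneg _)
    _ = δ * ∫ x, u x ^ 2 ∂μ + Cδ * ∫ x, |u x| ^ q ∂μ := by
        rw [integral_add (hsq.const_mul δ) ((hpow q hq).const_mul Cδ), integral_const_mul,
          integral_const_mul]
    _ ≤ δ * ∫ x, u x ^ 2 ∂μ + Cδ * (CS * (∫ x, ‖fderiv ℝ u x‖ ^ 2 ∂μ) ^ (n / (n - 2))) := by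
        gcongr
        simpa [Real.rpow_two, hexp] using hSob u hu hus
    _ = _ := by ring

end Sobolev

section Pohozaev
variable {X : Type*} [TopologicalSpace X] [MeasurableSpace X] [OpensMeasurableSpace X]
  {μ : Measure X} [IsFiniteMeasureOnCompacts μ]

theorem mul_integral_add_le_of_pohozaev {n lam M ε C p : ℝ} (hn : 2 < n)
    (hM : M ≤ min 1 (lam * n / (n - 2))) (hε : 0 ≤ ε) {F : ℝ → ℝ} (hF : Measurable F)
    (hFb : ∀ s, |F s| ≤ ε / 2 * s ^ 2 + C * |s| ^ p) {g u : X → ℝ} (hg : 0 ≤ g)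
    (hu : Continuous u) (hus : HasCompactSupport u) (hp : 0 < p)
    (hcon : (n - 2) * ∫ x, g x ∂μ = 2 * n * ∫ x, (F (u x) - lam / 2 * u x ^ 2) ∂μ) :
    (M - 2 * n / (n - 2) * ε) * (∫ x, g x ∂μ + ∫ x, u x ^ 2 ∂μ) ≤
      2 * n / (n - 2) * C * ∫ x, |u x| ^ p ∂μ := by
  have hn2 : 0 < n - 2 := sub_pos.2 hn
  have hu_sq : Integrable (fun x => u x ^ 2) μ :=
    hu.integrable_comp_of_hasCompactSupport hus (continuous_pow 2) (zero_pow two_ne_zero)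
  have hu_pow : Integrable (fun x => |u x| ^ p) μ :=
    hu.integrable_comp_of_hasCompactSupport hus (continuous_abs.rpow_const fun _ => Or.inr hp.le)
      (by simp [hp.ne'])
  have hbound : Integrable (fun x => ε / 2 * u x ^ 2 + C * |u x| ^ p) μ :=
    (hu_sq.const_mul _).add (hu_pow.const_mul _)
  have hFu : Integrable (fun x => F (u x)) μ :=
    hbound.mono' (hF.comp hu.measurable).aestronglyMeasurable (ae_of_all _ fun x => hFb (u x))
  have hF_le : ∫ x, F (u x) ∂μ ≤ ε / 2 * ∫ x, u x ^ 2 ∂μ + C * ∫ x, |u x| ^ p ∂μ := by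
    rw [← integral_const_mul, ← integral_const_mul, ← integral_add (hu_sq.const_mul _)
      (hu_pow.const_mul _)]
    exact integral_mono hFu hbound fun x => (le_abs_self _).trans (hFb (u x))
  rw [integral_sub hFu (hu_sq.const_mul _), integral_const_mul] at hcon
  set D := ∫ x, g x ∂μ
  set I := ∫ x, u x ^ 2 ∂μ
  have hD : 0 ≤ D := integral_nonneg hg
  have hI : 0 ≤ I := integral_nonneg fun x => sq_nonneg _
  set J := ∫ x, |u x| ^ p ∂μ
  have hMD : (n - 2) * (M * D) ≤ (n - 2) * D :=
    mul_le_mul_of_nonneg_left (mul_le_of_le_one_left hD (hM.trans (min_le_left _ _))) hn2.le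
  have hMI : M * (n - 2) * I ≤ lam * n * I := by
    refine mul_le_mul_of_nonneg_right ?_ hI
    rw [← le_div_iff₀ hn2]
    exact hM.trans (min_le_right _ _)
  have hFn := mul_le_mul_of_nonneg_left hF_le (by positivity : (0 : ℝ) ≤ 2 * n)
  have hq : 2 * n / (n - 2) * (n - 2) = 2 * n := div_mul_cancel₀ _ hn2.ne'
  refine le_of_mul_le_mul_left ?_ hn2
  calc (n - 2) * ((M - 2 * n / (n - 2) * ε) * (D + I))
      = (n - 2) * (M * D) + M * (n - 2) * I - 2 * n * ε * (D + I) := by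
        linear_combination (-ε * (D + I)) * hq
    _ ≤ 2 * n * C * J := by
        have hεD : 0 ≤ n * ε * D := by positivity
        have hεI : 0 ≤ n * ε * I := by positivity
        linarith
    _ = (n - 2) * (2 * n / (n - 2) * C * J) := by
        linear_combination (-C * J) * hq

end Pohozaev

theorem pohozaev_manifold_away_from_zero_general {N : ℕ} (hN : 3 ≤ N)
    (lam : ℝ)
    (p : ℝ) (hp : 2 < p) (hp2 : p < 2 * N / ((N : ℝ) - 2))
    (M : ℝ) (hM : M = min 1 (lam * N / ((N : ℝ) - 2)))
    (ε₀ C₁ : ℝ) (hε₀ : 0 < ε₀) (hC₁ : 0 < C₁)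
    (hsmall : 2 * N / ((N : ℝ) - 2) * ε₀ < M)
    (F : ℝ → ℝ) (hFmeas : Measurable F)
    (hFbound : ∀ s : ℝ, |F s| ≤ ε₀ / 2 * s ^ 2 + C₁ * |s| ^ p) :
    ∃ σ : ℝ, 0 < σ ∧
      ∀ u : EuclideanSpace ℝ (Fin N) → ℝ,
        ContDiff ℝ 1 u → HasCompactSupport u → u ≠ 0 →
        (((N : ℝ) - 2) * ∫ x, ‖fderiv ℝ u x‖ ^ 2 =
          2 * (N : ℝ) * ∫ x, (F (u x) - lam / 2 * (u x) ^ 2)) →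
        σ ≤ ∫ x, (‖fderiv ℝ u x‖ ^ 2 + (u x) ^ 2) := by
  have hN2 : (2 : ℝ) < N := by exact_mod_cast hN
  set q := 2 * (N : ℝ) / (N - 2)
  set r := (N : ℝ) / (N - 2)
  set κ := M - q * ε₀
  have hq : 0 < q := by positivity
  have hκ : 0 < κ := sub_pos.2 hsmall
  have hr : 1 < r := by rw [one_lt_div (by linarith)]; linarith
  obtain ⟨C, hC, hGN⟩ := exists_integral_abs_rpow_le_mul_integral_sq_add
    (volume : Measure (EuclideanSpace ℝ (Fin N))) (by rw [finrank_euclideanSpace_fin]; exact hN) hp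
    (by simpa using hp2) (δ := κ / (2 * (q * C₁))) (by positivity)
  simp only [finrank_euclideanSpace_fin] at hGN
  refine ⟨(κ / 2 / (q * C₁ * C)) ^ (r - 1)⁻¹, by positivity, fun u hu hus hu0 hcon => ?_⟩
  rw [integral_norm_fderiv_sq_add_sq hu hus]
  set D := ∫ x, ‖fderiv ℝ u x‖ ^ 2
  set I := ∫ x, u x ^ 2
  set J := ∫ x, |u x| ^ p
  have hD : 0 ≤ D := integral_nonneg fun x => by positivity
  have hI : 0 < I := integral_sq_pos_of_ne_zero hu.continuous hus hu0
  have hpoh : κ * (D + I) ≤ q * C₁ * J := mul_integral_add_le_of_pohozaev hN2 hM.le hε₀.le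
    hFmeas hFbound (fun x => sq_nonneg ‖fderiv ℝ u x‖) hu.continuous hus (by linarith) hcon
  refine Real.rpow_inv_le_of_mul_le_mul_rpow (by positivity) (by positivity) (by linarith) hr ?_
  calc κ / 2 * (D + I) ≤ q * C₁ * J - κ / 2 * I := by linarith [mul_nonneg hκ.le hD]
    _ ≤ q * C₁ * (κ / (2 * (q * C₁)) * I + C * D ^ r) - κ / 2 * I := by
        gcongr
        exact hGN u hu hus
    _ = q * C₁ * C * D ^ r := by field_simp; ring
    _ ≤ q * C₁ * C * (D + I) ^ r := by gcongr; linarith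

/-- The Pohozaev manifold is bounded away from `0` in `H¹`: under the subcritical growth
bound on `F`, there is `σ > 0` such that every nonzero `C¹` compactly supported `u`
satisfying the Pohozaev constraint has `H¹`-norm squared at least `σ`. -/
theorem pohozaev_manifold_away_from_zero {N : ℕ} (hN : 3 ≤ N)
    (lam : ℝ) (hlam : 0 < lam)
    (p : ℝ) (hp : 2 < p) (hp2 : p < 2 * N / ((N : ℝ) - 2))
    (M : ℝ) (hM : M = min 1 (lam * N / ((N : ℝ) - 2)))
    (ε₀ C₁ : ℝ) (hε₀ : 0 < ε₀) (hC₁ : 0 < C₁)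
    (hsmall : 2 * N / ((N : ℝ) - 2) * ε₀ < M)
    (F : ℝ → ℝ) (hFmeas : Measurable F)
    (hFbound : ∀ s : ℝ, |F s| ≤ ε₀ / 2 * s ^ 2 + C₁ * |s| ^ p) :
    ∃ σ : ℝ, 0 < σ ∧
      ∀ u : EuclideanSpace ℝ (Fin N) → ℝ,
        ContDiff ℝ 1 u → HasCompactSupport u → u ≠ 0 →
        (((N : ℝ) - 2) * ∫ x, ‖fderiv ℝ u x‖ ^ 2 =
          2 * (N : ℝ) * ∫ x, (F (u x) - lam / 2 * (u x) ^ 2)) →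
        σ ≤ ∫ x, (‖fderiv ℝ u x‖ ^ 2 + (u x) ^ 2) :=
  pohozaev_manifold_away_from_zero_general hN lam p hp hp2 M hM ε₀ C₁ hε₀ hC₁ hsmall F hFmeas
    hFbound
end

section
/- Let N ≥ 3 be a natural number, let P, Q, η be real numbers with P > 0, and suppose that (N−2) P = 2N Q (the Pohozaev constraint J(u) = 0 with P = ∫‖∇u‖² and Q = ∫G(u)) and that ((1 + η(N−2))(N−2)/2) P = N (1 + ηN) Q (the Pohozaev identity H(u) = 0 for the Lagrange-multiplier equation −(1+η(N−2))Δu + λ(1+ηN)u = (1+ηN) f(u)). Then η = 0. -/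
/-- The Lagrange multiplier vanishes: if `P > 0`, `(N−2)P = 2NQ` and
`((1+η(N−2))(N−2)/2)P = N(1+ηN)Q`, then `η = 0`. -/
theorem lagrange_multiplier_zero {N : ℕ} (hN : 3 ≤ N)
    (P Q η : ℝ) (hP : 0 < P)
    (h1 : ((N : ℝ) - 2) * P = 2 * N * Q)
    (h2 : (1 + η * ((N : ℝ) - 2)) * ((N : ℝ) - 2) / 2 * P = N * (1 + η * N) * Q) :
    η = 0 := by
  have hN' : (3 : ℝ) ≤ (N : ℝ) := by exact_mod_cast hN
  have key : η * ((N : ℝ) - 2) * P = 0 := by linear_combination (1/2*(1+η*(N:ℝ)))*h1 - h2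
  rcases mul_eq_zero.1 key with h | h
  · rcases mul_eq_zero.1 h with h | h
    · exact h
    · linarith
  · linarith
end
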